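/- Combining the rounding bound and the approximation lemma: with v' defined by rounding weights down by a factor k = ε·w_max/l_bin (where w_max ≥ v(N) and lengths satisfy l_j ≥ 1), the Shapley value φ'_i computed with respect to v' satisfies |φ_i - φ'_i| ≤ ε·w_max for every agent i. -/

import Mathlib

open Finset

/-- Value function of a knapsack budgeted game. -/
def knapsackValue {ι : Type*} [DecidableEq ι] (l w : ι → ℕ) (lbin : ℕ) (S : Finset ι) : ℕ :=
  (S.powerset.filter (fun T => ∑ k ∈ T, l k ≤ lbin)).sup (fun T => ∑ k ∈ T, w k)

noncomputable def shapley {ι : Type*} [DecidableEq ι] (N : Finset ι) (v : Finset ι → ℝ) (i : ι) : ℝ :=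
  ∑ S ∈ (N.erase i).powerset,
    ((Nat.factorial S.card * Nat.factorial (N.card - S.card - 1) : ℝ) / (Nat.factorial N.card : ℝ))
      * (v (insert i S) - v S)

/-!
Rounding each weight down to a multiple of `k` loses at most `k` per packed item, and an optimal
packing has at most `lbin` items because every length is at least `1`. Hence `0 ≤ v S - v' S ≤ k lbin`
for every coalition `S`, so every marginal contribution changes by at most `k lbin = ε wmax`, and the
Shapley value, an average of marginal contributions, changes by at most as much.
-/

lemma mul_floor_div_le {k : ℝ} (hk : 0 < k) {x : ℝ} (hx : 0 ≤ x) : k * ⌊x / k⌋₊ ≤ x :=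
  (le_div_iff₀' hk).1 (Nat.floor_le (div_nonneg hx hk.le))

lemma le_mul_floor_div_add {k : ℝ} (hk : 0 < k) (x : ℝ) : x ≤ k * ⌊x / k⌋₊ + k := by
  have := (div_lt_iff₀' hk).1 (Nat.lt_floor_add_one (x / k))
  linarith

section Knapsack

variable {ι : Type*} [DecidableEq ι] (l : ι → ℕ) (lbin : ℕ)

lemma sum_le_knapsackValue (w : ι → ℕ) {S T : Finset ι} (hTS : T ⊆ S)
    (hT : ∑ j ∈ T, l j ≤ lbin) :
    ∑ j ∈ T, w j ≤ knapsackValue l w lbin S :=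
  le_sup (f := fun T => ∑ j ∈ T, w j) (by simp [hTS, hT])

lemma exists_knapsackValue_eq (w : ι → ℕ) (S : Finset ι) :
    ∃ T ⊆ S, ∑ j ∈ T, l j ≤ lbin ∧ knapsackValue l w lbin S = ∑ j ∈ T, w j := by
  obtain ⟨T, hT, hval⟩ := exists_mem_eq_sup
    (S.powerset.filter (fun T => ∑ j ∈ T, l j ≤ lbin)) ⟨∅, by simp⟩ (fun T => ∑ j ∈ T, w j)
  rw [mem_filter, mem_powerset] at hT
  exact ⟨T, hT.1, hT.2, hval⟩

lemma mul_knapsackValue_le {w w' : ι → ℕ} {k : ℝ} (hw : ∀ j, k * w' j ≤ w j)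
    (S : Finset ι) :
    k * knapsackValue l w' lbin S ≤ knapsackValue l w lbin S := by
  obtain ⟨T, hTS, hT, hval⟩ := exists_knapsackValue_eq l lbin w' S
  calc k * (knapsackValue l w' lbin S : ℝ) = ∑ j ∈ T, k * w' j := by
        rw [hval, Nat.cast_sum, mul_sum]
    _ ≤ ∑ j ∈ T, (w j : ℝ) := sum_le_sum fun j _ => hw j
    _ ≤ knapsackValue l w lbin S := by
        exact_mod_cast sum_le_knapsackValue l lbin w hTS hT

lemma knapsackValue_le_mul_add {w w' : ι → ℕ} {k : ℝ} (hl : ∀ j, 1 ≤ l j) (hk : 0 ≤ k)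
    (hw : ∀ j, w j ≤ k * w' j + k) (S : Finset ι) :
    knapsackValue l w lbin S ≤ k * knapsackValue l w' lbin S + k * lbin := by
  obtain ⟨T, hTS, hT, hval⟩ := exists_knapsackValue_eq l lbin w S
  have hcard : T.card ≤ lbin := by
    simpa using (card_nsmul_le_sum T l 1 fun j _ => hl j).trans hT
  have hw' : (∑ j ∈ T, w' j : ℝ) ≤ knapsackValue l w' lbin S := by
    exact_mod_cast sum_le_knapsackValue l lbin w' hTS hT
  calc (knapsackValue l w lbin S : ℝ) = ∑ j ∈ T, (w j : ℝ) := by rw [hval, Nat.cast_sum]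
    _ ≤ ∑ j ∈ T, (k * w' j + k) := sum_le_sum fun j _ => hw j
    _ = k * ∑ j ∈ T, (w' j : ℝ) + k * T.card := by
        rw [sum_add_distrib, sum_const, nsmul_eq_mul, mul_sum, mul_comm k]
    _ ≤ k * knapsackValue l w' lbin S + k * lbin := by gcongr

lemma knapsackValue_sub_rounded_mem_Icc (w : ι → ℕ) (hl : ∀ j, 1 ≤ l j) {k : ℝ} (hk : 0 < k)
    (S : Finset ι) :
    (knapsackValue l w lbin S : ℝ) - k * knapsackValue l (fun j => ⌊(w j : ℝ) / k⌋₊) lbin S ∈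
      Set.Icc 0 (k * lbin) :=
  ⟨sub_nonneg.2 (mul_knapsackValue_le l lbin (fun j => mul_floor_div_le hk (by positivity)) S),
    sub_le_iff_le_add'.2
      (knapsackValue_le_mul_add l lbin hl hk.le (fun j => le_mul_floor_div_add hk _) S)⟩

end Knapsack

section Shapley

variable {ι : Type*} [DecidableEq ι]

noncomputable def shapleyWeight (n s : ℕ) : ℝ :=
  (s.factorial * (n - s - 1).factorial : ℝ) / n.factorial

lemma shapleyWeight_nonneg (n s : ℕ) : 0 ≤ shapleyWeight n s := by
  unfold shapleyWeight; positivity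

lemma shapley_eq_sum_shapleyWeight (N : Finset ι) (v : Finset ι → ℝ) (i : ι) :
    shapley N v i =
      ∑ S ∈ (N.erase i).powerset, shapleyWeight N.card S.card * (v (insert i S) - v S) :=
  rfl

lemma choose_mul_shapleyWeight {c m : ℕ} (hm : m ≤ c) :
    c.choose m * shapleyWeight (c + 1) m = 1 / (c + 1) := by
  have hchoose : (c.choose m * m.factorial * (c - m).factorial : ℝ) = c.factorial := by
    exact_mod_cast Nat.choose_mul_factorial_mul_factorial hm
  have hpos : (0 : ℝ) < c.choose m := by exact_mod_cast Nat.choose_pos hm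
  rw [shapleyWeight, Nat.factorial_succ, show c + 1 - m - 1 = c - m by omega]
  push_cast
  rw [← hchoose]
  field_simp

lemma sum_powerset_shapleyWeight {α : Type*} (s : Finset α) :
    ∑ S ∈ s.powerset, shapleyWeight (s.card + 1) S.card = 1 := by
  rw [sum_powerset_apply_card]
  calc ∑ m ∈ range (s.card + 1), s.card.choose m • shapleyWeight (s.card + 1) m
      = ∑ m ∈ range (s.card + 1), (1 / (s.card + 1) : ℝ) := by
        refine sum_congr rfl fun m hm => ?_
        rw [nsmul_eq_mul, choose_mul_shapleyWeight (Nat.lt_succ_iff.1 (mem_range.1 hm))]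
    _ = 1 := by
        rw [sum_const, card_range, nsmul_eq_mul]
        push_cast
        field_simp

lemma shapley_sub (N : Finset ι) (v v' : Finset ι → ℝ) (i : ι) :
    shapley N v i - shapley N v' i = shapley N (v - v') i := by
  simp only [shapley_eq_sum_shapleyWeight, ← sum_sub_distrib, Pi.sub_apply]
  exact sum_congr rfl fun S _ => by ring

lemma abs_shapley_le {N : Finset ι} {i : ι} (hi : i ∈ N) {u : Finset ι → ℝ} {c : ℝ}
    (hu : ∀ S ⊆ N.erase i, |u (insert i S) - u S| ≤ c) :
    |shapley N u i| ≤ c := by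
  have hcard : N.card = (N.erase i).card + 1 := (card_erase_add_one hi).symm
  rw [shapley_eq_sum_shapleyWeight]
  calc |∑ S ∈ (N.erase i).powerset, shapleyWeight N.card S.card * (u (insert i S) - u S)|
      ≤ ∑ S ∈ (N.erase i).powerset, shapleyWeight N.card S.card * c := by
        refine (abs_sum_le_sum_abs _ _).trans (sum_le_sum fun S hS => ?_)
        rw [abs_mul, abs_of_nonneg (shapleyWeight_nonneg _ _)]
        exact mul_le_mul_of_nonneg_left (hu S (mem_powerset.1 hS)) (shapleyWeight_nonneg _ _)
    _ = c := by rw [← sum_mul, hcard, sum_powerset_shapleyWeight, one_mul]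

end Shapley

theorem knapsack_rounded_shapley_approx_general {ι : Type*} [DecidableEq ι] (N : Finset ι)
    (l w : ι → ℕ) (lbin : ℕ) (hl : ∀ j, 1 ≤ l j)
    (ε wmax : ℝ)
    (k : ℝ) (hkdef : k = ε * wmax / lbin) (hk : 0 < k)
    (i : ι) (hi : i ∈ N) :
    |shapley N (fun S => (knapsackValue l w lbin S : ℝ)) i -
        shapley N (fun S => k * (knapsackValue l (fun j => ⌊(w j : ℝ) / k⌋₊) lbin S : ℝ)) i| ≤
      ε * wmax := by
  have hlbin : (lbin : ℝ) ≠ 0 := by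
    rintro h
    rw [h, div_zero] at hkdef
    exact hk.ne' hkdef
  have hgap := knapsackValue_sub_rounded_mem_Icc l lbin w hl hk
  rw [shapley_sub, show ε * wmax = k * lbin by rw [hkdef, div_mul_cancel₀ _ hlbin]]
  exact abs_shapley_le hi fun S _ =>
    abs_sub_le_of_nonneg_of_le (hgap _).1 (hgap _).2 (hgap S).1 (hgap S).2

theorem knapsack_rounded_shapley_approx {ι : Type*} [DecidableEq ι] (N : Finset ι)
    (l w : ι → ℕ) (lbin : ℕ) (hlbin : 1 ≤ lbin) (hl : ∀ j, 1 ≤ l j)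
    (ε wmax : ℝ) (hε : 0 < ε) (hwmax : (knapsackValue l w lbin N : ℝ) ≤ wmax)
    (k : ℝ) (hkdef : k = ε * wmax / lbin) (hk : 0 < k)
    (i : ι) (hi : i ∈ N) :
    |shapley N (fun S => (knapsackValue l w lbin S : ℝ)) i -
        shapley N (fun S => k * (knapsackValue l (fun j => ⌊(w j : ℝ) / k⌋₊) lbin S : ℝ)) i| ≤
      ε * wmax :=
  knapsack_rounded_shapley_approx_general N l w lbin hl ε wmax k hkdef hk i hi
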